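/- Let a ∈ ℝ∖{0}, c ∈ ℝ, U ⊆ ℂ open and f : U → ℝ smooth such that the curvature K of ds² = e^{−2f}|dz|² satisfies K(z) ≠ c for all z ∈ U. Then ds² is a generalized Ricci metric of type (a,0,c) on U if and only if the metric |K−c|^{2/a}·ds² is flat, i.e., Δ₀(f − (1/a)·log|K−c|) = 0 on U. -/

import Mathlib

open Filter Topology

/-- Euclidean Laplacian on `ℂ ≅ ℝ²`. -/
noncomputable def lap0 (g : ℂ → ℝ) (z : ℂ) : ℝ :=
  fderiv ℝ (fun w => fderiv ℝ g w 1) z 1 +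
    fderiv ℝ (fun w => fderiv ℝ g w Complex.I) z Complex.I

/-- Squared Euclidean gradient norm on `ℂ ≅ ℝ²`. -/
noncomputable def grad0sq (g : ℂ → ℝ) (z : ℂ) : ℝ :=
  (fderiv ℝ g z 1) ^ 2 + (fderiv ℝ g z Complex.I) ^ 2

/-- Gaussian curvature of the conformal metric `e^{-2f}|dz|²`. -/
noncomputable def curv (f : ℂ → ℝ) (z : ℂ) : ℝ :=
  Real.exp (2 * f z) * lap0 f z

/-- `e^{-2f}|dz|²` is a generalized Ricci metric of type `(a,b,c)` on `U`:
`(c-K)·ΔK + ‖∇K‖² + (aK+b)(K-c)² = 0`, where `Δ = e^{2f}Δ₀` and `‖∇·‖² = e^{2f}|∇₀·|²`. -/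
def IsGenRicci (a b c : ℝ) (f : ℂ → ℝ) (U : Set ℂ) : Prop :=
  ∀ z ∈ U,
    (c - curv f z) * (Real.exp (2 * f z) * lap0 (curv f) z) +
      Real.exp (2 * f z) * grad0sq (curv f) z +
      (a * curv f z + b) * (curv f z - c) ^ 2 = 0

section Aux

variable {U : Set ℂ}

private lemma contDiffOn_fderiv_apply {u : ℂ → ℝ} (hU : IsOpen U)
    (hu : ContDiffOn ℝ (⊤ : ℕ∞) u U) (v : ℂ) :
    ContDiffOn ℝ (⊤ : ℕ∞) (fun w => fderiv ℝ u w v) U :=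
  (hu.fderiv_of_isOpen hU (by simp)).clm_apply contDiffOn_const

private lemma contDiffOn_lap0 {u : ℂ → ℝ} (hU : IsOpen U) (hu : ContDiffOn ℝ (⊤ : ℕ∞) u U) :
    ContDiffOn ℝ (⊤ : ℕ∞) (lap0 u) U := by
  unfold lap0
  exact (contDiffOn_fderiv_apply hU (contDiffOn_fderiv_apply hU hu 1) 1).add
    (contDiffOn_fderiv_apply hU (contDiffOn_fderiv_apply hU hu Complex.I) Complex.I)

private lemma contDiffOn_curv {f : ℂ → ℝ} (hU : IsOpen U) (hf : ContDiffOn ℝ (⊤ : ℕ∞) f U) :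
    ContDiffOn ℝ (⊤ : ℕ∞) (curv f) U := by
  unfold curv
  exact (Real.contDiff_exp.comp_contDiffOn (contDiffOn_const.mul hf)).mul
    (contDiffOn_lap0 hU hf)

private lemma diffAt {u : ℂ → ℝ} (hU : IsOpen U) (hu : ContDiffOn ℝ (⊤ : ℕ∞) u U)
    {z : ℂ} (hz : z ∈ U) : DifferentiableAt ℝ u z :=
  (hu.contDiffAt (hU.mem_nhds hz)).differentiableAt (by simp)

private lemma key (hU : IsOpen U) {f : ℂ → ℝ} (hf : ContDiffOn ℝ (⊤ : ℕ∞) f U) {c : ℝ}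
    (hK : ∀ w ∈ U, curv f w ≠ c) (s : ℝ) {z : ℂ} (hz : z ∈ U) :
    lap0 (fun w => f w - s * Real.log (curv f w - c)) z
      = lap0 f z - s * ((curv f z - c)⁻¹ * lap0 (curv f) z
          - ((curv f z - c) ^ 2)⁻¹ * grad0sq (curv f) z) := by
  set K := curv f with hKdef
  have hKs : ContDiffOn ℝ (⊤ : ℕ∞) K U := contDiffOn_curv hU hf
  have hne : ∀ w ∈ U, K w - c ≠ 0 := fun w hw => sub_ne_zero.2 (hK w hw)
  set g : ℂ → ℝ := fun w => f w - s * Real.log (K w - c) with hgdef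
  have claim1 : ∀ w ∈ U, ∀ v : ℂ,
      fderiv ℝ g w v = fderiv ℝ f w v - s * ((K w - c)⁻¹ * fderiv ℝ K w v) := by
    intro w hw v
    have df := (diffAt hU hf hw).hasFDerivAt
    have dK := (diffAt hU hKs hw).hasFDerivAt
    have dh : HasFDerivAt (fun w => K w - c) (fderiv ℝ K w) w := dK.sub_const c
    have dg := df.sub ((dh.log (hne w hw)).const_mul s)
    rw [(show HasFDerivAt g _ w from dg).fderiv]
    simp [smul_eq_mul]
  have claim2 : ∀ v : ℂ, fderiv ℝ (fun w => fderiv ℝ g w v) z v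
      = fderiv ℝ (fun w => fderiv ℝ f w v) z v
        - s * ((K z - c)⁻¹ * fderiv ℝ (fun w => fderiv ℝ K w v) z v
          - ((K z - c) ^ 2)⁻¹ * (fderiv ℝ K z v) ^ 2) := by
    intro v
    have hev : (fun w => fderiv ℝ g w v)
        =ᶠ[𝓝 z] fun w => fderiv ℝ f w v - s * ((K w - c)⁻¹ * fderiv ℝ K w v) := by
      filter_upwards [hU.mem_nhds hz] with w hw
      exact claim1 w hw v
    have dA := (diffAt hU (contDiffOn_fderiv_apply hU hf v) hz).hasFDerivAt
    have dB := (diffAt hU (contDiffOn_fderiv_apply hU hKs v) hz).hasFDerivAt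
    have dK := (diffAt hU hKs hz).hasFDerivAt
    have dh : HasFDerivAt (fun w => K w - c) (fderiv ℝ K z) z := dK.sub_const c
    have dinv : HasFDerivAt (fun w => (K w - c)⁻¹)
        ((-((K z - c) ^ 2)⁻¹) • fderiv ℝ K z) z :=
      (hasDerivAt_inv (hne z hz)).comp_hasFDerivAt z dh
    have dprod := dinv.mul dB
    have dphi := dA.sub (dprod.const_mul s)
    rw [hev.fderiv_eq, (show HasFDerivAt (fun w => fderiv ℝ f w v - s * ((K w - c)⁻¹ * fderiv ℝ K w v)) _ z from dphi).fderiv]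
    simp only [ContinuousLinearMap.sub_apply, ContinuousLinearMap.add_apply,
      ContinuousLinearMap.smul_apply, smul_eq_mul]
    ring
  show lap0 g z = _
  unfold lap0 grad0sq
  rw [claim2 1, claim2 Complex.I]
  ring

end Aux

theorem stmt5 (a c : ℝ) (ha : a ≠ 0) (U : Set ℂ) (hU : IsOpen U)
    (f : ℂ → ℝ) (hf : ContDiffOn ℝ (⊤ : ℕ∞) f U) (hK : ∀ z ∈ U, curv f z ≠ c) :
    IsGenRicci a 0 c f U ↔
      ∀ z ∈ U, lap0 (fun w => f w - (1 / a) * Real.log |curv f w - c|) z = 0 := by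
  have habs : (fun w => f w - (1 / a) * Real.log |curv f w - c|)
      = fun w => f w - (1 / a) * Real.log (curv f w - c) := by
    funext w; rw [Real.log_abs]
  rw [habs]
  unfold IsGenRicci
  refine forall₂_congr fun z hz => ?_
  rw [key hU hf hK (1 / a) hz]
  have hkc : curv f z - c ≠ 0 := sub_ne_zero.2 (hK z hz)
  have hE : (0 : ℝ) < Real.exp (2 * f z) := Real.exp_pos _
  set E := Real.exp (2 * f z) with hEdef
  set F := lap0 f z with hFdef
  set L := lap0 (curv f) z with hLdef
  set G := grad0sq (curv f) z with hGdef
  set k := curv f z with hkdef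
  have hcurv : k = E * F := rfl
  have hid : (c - k) * (E * L) + E * G + (a * k + 0) * (k - c) ^ 2
      = (a * (k - c) ^ 2 * E) * (F - 1 / a * ((k - c)⁻¹ * L - ((k - c) ^ 2)⁻¹ * G)) := by
    rw [hcurv] at hkc ⊢
    field_simp
    ring
  rw [hid, mul_eq_zero]
  have hnz : a * (k - c) ^ 2 * E ≠ 0 :=
    mul_ne_zero (mul_ne_zero ha (pow_ne_zero 2 hkc)) (ne_of_gt hE)
  simp [hnz]
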